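/- arXiv:2303.11663 — 2 statements merged into one kernel-verified Lean document; each statement's English description precedes it below -/
import Mathlib

section
/- Let s ∈ (0,1), m > ω > 0, Ω ∈ (0, m^2 - ω^2], and suppose the real number α satisfies α > -α_0(s,Ω) where α_0(s,t) = s^{-s}(1-s)^{s-1} t^{1-s}. Then there exists ε_0 > 0 such that both c_1 := 1 - α^- s ε_0 > 0 and c_2 := m^2 - ω^2 - α^- (1-s) ε_0^{-s/(1-s)} > 0, where α^- = max(-α, 0). -/
/-!
Write `A = α⁻` and `T = m² - ω²`. At `ε = ((1 - s) / (s T))^(1 - s)` the two quantities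
`A s ε` and `A (1 - s) ε^(-s/(1-s))` equal `1` and `T` respectively exactly when `A = α₀(s, T)`,
so every `A < α₀(s, T)` is admissible at that `ε`. Finally `α₀(s, Ω) ≤ α₀(s, T)` because
`t ↦ t^(1-s)` is monotone.
-/

open Real

/-- The paper's `α₀(s, t)`. -/
noncomputable def criticalCoupling (s t : ℝ) : ℝ := s ^ (-s) * (1 - s) ^ (s - 1) * t ^ (1 - s)

noncomputable def balancedEps (s t : ℝ) : ℝ := ((1 - s) / (s * t)) ^ (1 - s)

section

variable {s t : ℝ}

theorem criticalCoupling_pos (hs : s ∈ Set.Ioo (0 : ℝ) 1) (ht : 0 < t) :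
    0 < criticalCoupling s t := by
  have := hs.1
  have := sub_pos.2 hs.2
  unfold criticalCoupling
  positivity

theorem criticalCoupling_mono (hs0 : 0 ≤ s) (hs1 : s ≤ 1) {Ω : ℝ} (hΩ : 0 ≤ Ω) (hΩt : Ω ≤ t) :
    criticalCoupling s Ω ≤ criticalCoupling s t := by
  have := sub_nonneg.2 hs1
  unfold criticalCoupling
  gcongr

theorem balancedEps_pos (hs : s ∈ Set.Ioo (0 : ℝ) 1) (ht : 0 < t) : 0 < balancedEps s t := by
  have := hs.1
  have := sub_pos.2 hs.2
  unfold balancedEps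
  positivity

theorem mul_balancedEps_mul_criticalCoupling (hs : s ∈ Set.Ioo (0 : ℝ) 1) (ht : 0 < t) :
    s * balancedEps s t * criticalCoupling s t = 1 := by
  have hs0 := hs.1
  have hs1 := sub_pos.2 hs.2
  have hs_pow : s * s ^ (-s) = s ^ (1 - s) := by
    rw [← rpow_one_add' hs0.le (ne_of_gt (by linarith)), sub_eq_add_neg]
  have hs1_pow : (1 - s) ^ (1 - s) * (1 - s) ^ (s - 1) = 1 := by
    rw [← rpow_add hs1]; simp
  unfold balancedEps criticalCoupling
  rw [div_rpow hs1.le (by positivity), mul_rpow hs0.le ht.le]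
  field_simp
  linear_combination s ^ (1 - s) * hs1_pow + (1 - s) ^ (1 - s) * (1 - s) ^ (s - 1) * hs_pow

theorem mul_balancedEps_rpow_mul_criticalCoupling (hs : s ∈ Set.Ioo (0 : ℝ) 1) (ht : 0 < t) :
    (1 - s) * balancedEps s t ^ (-(s / (1 - s))) * criticalCoupling s t = t := by
  have hs0 := hs.1
  have hs1 := sub_pos.2 hs.2
  have hs_pow : s ^ s * s ^ (-s) = 1 := by rw [← rpow_add hs0]; simp
  have hs1_pow : (1 - s) * (1 - s) ^ (s - 1) = (1 - s) ^ s := by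
    rw [← rpow_one_add' hs1.le (ne_of_gt (by linarith))]; ring_nf
  have ht_pow : t ^ s * t ^ (1 - s) = t := by rw [← rpow_add ht]; simp
  unfold balancedEps criticalCoupling
  rw [← rpow_mul (by positivity), mul_neg, mul_div_cancel₀ _ hs1.ne', rpow_neg (by positivity),
    ← inv_rpow (by positivity), inv_div, div_rpow (by positivity) hs1.le, mul_rpow hs0.le ht.le]
  have : (1 - s) ^ s ≠ 0 := by positivity
  field_simp
  linear_combination (s ^ s * s ^ (-s)) * (t ^ s * t ^ (1 - s)) * hs1_pow
    + (1 - s) ^ s * (t ^ s * t ^ (1 - s)) * hs_pow + (1 - s) ^ s * ht_pow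

theorem exists_pos_of_lt_criticalCoupling (hs : s ∈ Set.Ioo (0 : ℝ) 1) (ht : 0 < t) {A : ℝ}
    (hA : A < criticalCoupling s t) :
    ∃ ε : ℝ, 0 < ε ∧ A * s * ε < 1 ∧ A * (1 - s) * ε ^ (-(s / (1 - s))) < t := by
  have hε := balancedEps_pos hs ht
  have hgap := sub_pos.2 hA
  refine ⟨balancedEps s t, hε, ?_, ?_⟩
  · have := mul_pos (mul_pos hs.1 hε) hgap
    linarith [mul_balancedEps_mul_criticalCoupling hs ht]
  · have := mul_pos (mul_pos (sub_pos.2 hs.2) (rpow_pos_of_pos hε (-(s / (1 - s))))) hgap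
    linarith [mul_balancedEps_rpow_mul_criticalCoupling hs ht]

end

theorem stmt_7_general (s m ω Ω α : ℝ) (hs : s ∈ Set.Ioo (0:ℝ) 1)
    (hΩ : Ω ∈ Set.Ioc (0:ℝ) (m ^ 2 - ω ^ 2))
    (hα : -(s ^ (-s) * (1 - s) ^ (s - 1) * Ω ^ (1 - s)) < α) :
    ∃ ε₀ : ℝ, 0 < ε₀ ∧ 0 < 1 - max (-α) 0 * s * ε₀ ∧
      0 < m ^ 2 - ω ^ 2 - max (-α) 0 * (1 - s) * ε₀ ^ (-(s / (1 - s))) := by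
  obtain ⟨hΩ0, hΩT⟩ := hΩ
  have hT : 0 < m ^ 2 - ω ^ 2 := hΩ0.trans_le hΩT
  have hα' : -criticalCoupling s Ω < α := hα
  have hα_neg : max (-α) 0 < criticalCoupling s (m ^ 2 - ω ^ 2) :=
    max_lt (by linarith [criticalCoupling_mono hs.1.le hs.2.le hΩ0.le hΩT])
      (criticalCoupling_pos hs hT)
  obtain ⟨ε, hε, h1, h2⟩ := exists_pos_of_lt_criticalCoupling hs hT hα_neg
  exact ⟨ε, hε, sub_pos.2 h1, sub_pos.2 h2⟩

/-- Key algebraic solvability lemma: if `s ∈ (0,1)`, `m > ω > 0`,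
`Ω ∈ (0, m² - ω²]`, and `α > -α₀(s,Ω)` where `α₀(s,t) = s^(-s) (1-s)^(s-1) t^(1-s)`,
then there is `ε₀ > 0` with `c₁ = 1 - α⁻ s ε₀ > 0` and
`c₂ = m² - ω² - α⁻ (1-s) ε₀^(-s/(1-s)) > 0`, where `α⁻ = max(-α,0)`. -/
theorem stmt_7 (s m ω Ω α : ℝ) (hs : s ∈ Set.Ioo (0:ℝ) 1) (hω : 0 < ω) (hm : ω < m)
    (hΩ : Ω ∈ Set.Ioc (0:ℝ) (m ^ 2 - ω ^ 2))
    (hα : -(s ^ (-s) * (1 - s) ^ (s - 1) * Ω ^ (1 - s)) < α) :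
    ∃ ε₀ : ℝ, 0 < ε₀ ∧ 0 < 1 - max (-α) 0 * s * ε₀ ∧
      0 < m ^ 2 - ω ^ 2 - max (-α) 0 * (1 - s) * ε₀ ^ (-(s / (1 - s))) :=
  stmt_7_general s m ω Ω α hs hΩ hα
end

section
/- Let s ∈ (0,1), α ∈ R, p ∈ [4,6), m > ω > 0, and suppose α^- < α_0(s, m^2-ω^2) = s^{-s}(1-s)^{s-1}(m^2-ω^2)^{1-s}. Let c_1, c_2 > 0 be constants with 1 - α^- s ε_0 = c_1 and m^2 - ω^2 - α^-(1-s)ε_0^{-s/(1-s)} = c_2 for a suitable ε_0 > 0. Then for every u ∈ H^1(R^3) and every measurable φ with 0 ≤ φ ≤ ω on {u ≠ 0}, the quantity p·J - J' u with J = (1/2)B_α(u,u) + ((m^2-ω^2)/2)‖u‖_2^2 + (ω/2)∫φu^2 - (1/p)‖u‖_p^p and J'u = B_α(u,u) + (m^2-ω^2)‖u‖_2^2 + 2ω∫φu^2 - ∫φ^2u^2 - ‖u‖_p^p satisfies pJ - J'u ≥ (p/2 - 1) min{c_1,c_2} ‖u‖_{H^1}^2. -/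
open MeasureTheory Real

noncomputable abbrev E3 := EuclideanSpace ℝ (Fin 3)

/-!
Expanding, `p J - J'u = (p/2 - 1)(B_α(u,u) + (m² - ω²)‖u‖₂²) + ω (p/2 - 2) ∫ φu² + ∫ φ²u²`, and
the last two terms are nonnegative for `p ≥ 4`, `φ ≥ 0`. For coercivity, Young's inequality
`t^s ≤ s ε₀ t + (1 - s) ε₀^(-s/(1-s))` at `t = |ξ|²`, integrated against `|û|²` and combined with
Plancherel, gives `‖(-Δ)^{s/2} u‖₂² ≤ s ε₀ ‖∇u‖₂² + (1 - s) ε₀^(-s/(1-s)) ‖u‖₂²`, whence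
`B_α(u,u) + (m² - ω²)‖u‖₂² ≥ c₁ ‖∇u‖₂² + c₂ ‖u‖₂²`.
-/

namespace Real

theorem rpow_le_young {s ε x : ℝ} (hs : s ∈ Set.Ioo (0 : ℝ) 1) (hε : 0 < ε) (hx : 0 ≤ x) :
    x ^ s ≤ s * ε * x + (1 - s) * ε ^ (-(s / (1 - s))) := by
  obtain ⟨hs0, hs1⟩ := hs
  have hweights : (ε * x) ^ s * (ε ^ (-(s / (1 - s)))) ^ (1 - s) = x ^ s := by
    rw [mul_rpow hε.le hx, ← rpow_mul hε.le, neg_mul, div_mul_cancel₀ _ (by linarith),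
      mul_right_comm, ← rpow_add hε, add_neg_cancel, rpow_zero, one_mul]
  calc x ^ s = (ε * x) ^ s * (ε ^ (-(s / (1 - s)))) ^ (1 - s) := hweights.symm
    _ ≤ s * (ε * x) + (1 - s) * ε ^ (-(s / (1 - s))) :=
      geom_mean_le_arith_mean2_weighted hs0.le (by linarith) (by positivity) (by positivity)
        (by ring)
    _ = s * ε * x + (1 - s) * ε ^ (-(s / (1 - s))) := by ring

end Real

theorem integral_rpow_two_mul_le_young {X : Type*} [MeasurableSpace X] {μ : Measure X}
    {s ε : ℝ} (hs : s ∈ Set.Ioo (0 : ℝ) 1) (hε : 0 < ε) {r w : X → ℝ} (hr : ∀ x, 0 ≤ r x)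
    (hw : ∀ x, 0 ≤ w x) (hw_int : Integrable w μ)
    (hrw_int : Integrable (fun x => r x ^ 2 * w x) μ) :
    ∫ x, r x ^ (2 * s) * w x ∂μ
      ≤ s * ε * ∫ x, r x ^ 2 * w x ∂μ + (1 - s) * ε ^ (-(s / (1 - s))) * ∫ x, w x ∂μ := by
  rw [← integral_const_mul, ← integral_const_mul, ← integral_add (hrw_int.const_mul _)
    (hw_int.const_mul _)]
  refine integral_mono_of_nonneg (.of_forall fun x => mul_nonneg (rpow_nonneg (hr x) _) (hw x))
    ((hrw_int.const_mul _).add (hw_int.const_mul _)) (.of_forall fun x => ?_)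
  have hyoung := Real.rpow_le_young hs hε (sq_nonneg (r x))
  rw [← rpow_natCast_mul (hr x), Nat.cast_ofNat] at hyoung
  beta_reduce
  nlinarith [mul_le_mul_of_nonneg_right hyoung (hw x)]

theorem min_mul_add_le_mul_add {a b x y : ℝ} (hx : 0 ≤ x) (hy : 0 ≤ y) :
    min a b * (x + y) ≤ a * x + b * y := by
  nlinarith [min_le_left a b, min_le_right a b]

theorem coercivity_of_fractional_le {s α ε ε' k A S U : ℝ} (hS : 0 ≤ S)
    (hSle : S ≤ s * ε * A + (1 - s) * ε' * U) :
    (1 - max (-α) 0 * s * ε) * A + (k - max (-α) 0 * (1 - s) * ε') * U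
      ≤ A + α * S + k * U := by
  have hαS : -max (-α) 0 * S ≤ α * S :=
    mul_le_mul_of_nonneg_right (neg_le.mp (le_max_left _ _)) hS
  nlinarith [mul_le_mul_of_nonneg_left hSle (le_max_right (-α) 0)]

theorem pJ_sub_J'_eq {p B k U ω Φ Φ₂ P : ℝ} (hp : p ≠ 0) :
    p * ((1 / 2) * B + k / 2 * U + (ω / 2) * Φ - (1 / p) * P)
        - (B + k * U + 2 * ω * Φ - Φ₂ - P)
      = (p / 2 - 1) * (B + k * U) + ω * (p / 2 - 2) * Φ + Φ₂ := by
  field_simp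
  ring

theorem stmt_17_general (s α p m ω ε₀ c₁ c₂ : ℝ) (hs : s ∈ Set.Ioo (0:ℝ) 1)
    (hp : p ∈ Set.Ico (4:ℝ) 6) (hω : 0 < ω)
    (hε₀ : 0 < ε₀)
    (hc₁ : c₁ = 1 - max (-α) 0 * s * ε₀)
    (hc₂ : c₂ = m ^ 2 - ω ^ 2 - max (-α) 0 * (1 - s) * ε₀ ^ (-(s / (1 - s))))
    (u : E3 → ℝ) (g : E3 → E3) (F : E3 → ℂ) (φ : E3 → ℝ)
    (hFint0 : Integrable (fun ξ => ‖F ξ‖ ^ 2))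
    (hFint1 : Integrable (fun ξ => ‖ξ‖ ^ 2 * ‖F ξ‖ ^ 2))
    (hPl0 : (∫ ξ, ‖F ξ‖ ^ 2) = ∫ x, (u x) ^ 2)
    (hPl1 : (∫ ξ, ‖ξ‖ ^ 2 * ‖F ξ‖ ^ 2) = ∫ x, ‖g x‖ ^ 2)
    (hφpos : ∀ x, 0 ≤ φ x) :
    p * ((1 / 2) * ((∫ x, ‖g x‖ ^ 2) + α * ∫ ξ, ‖ξ‖ ^ (2 * s) * ‖F ξ‖ ^ 2)
          + (m ^ 2 - ω ^ 2) / 2 * (∫ x, (u x) ^ 2)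
          + (ω / 2) * (∫ x, φ x * (u x) ^ 2) - (1 / p) * ∫ x, |u x| ^ p)
      - (((∫ x, ‖g x‖ ^ 2) + α * ∫ ξ, ‖ξ‖ ^ (2 * s) * ‖F ξ‖ ^ 2)
          + (m ^ 2 - ω ^ 2) * (∫ x, (u x) ^ 2)
          + 2 * ω * (∫ x, φ x * (u x) ^ 2) - (∫ x, (φ x) ^ 2 * (u x) ^ 2)
          - ∫ x, |u x| ^ p)
      ≥ (p / 2 - 1) * min c₁ c₂ * ((∫ x, (u x) ^ 2) + ∫ x, ‖g x‖ ^ 2) := by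
  obtain ⟨hp4, -⟩ := hp
  have hfrac : ∫ ξ, ‖ξ‖ ^ (2 * s) * ‖F ξ‖ ^ 2
      ≤ s * ε₀ * (∫ x, ‖g x‖ ^ 2) + (1 - s) * ε₀ ^ (-(s / (1 - s))) * ∫ x, u x ^ 2 := by
    rw [← hPl0, ← hPl1]
    exact integral_rpow_two_mul_le_young hs hε₀ norm_nonneg (fun ξ => sq_nonneg _) hFint0 hFint1
  have hcoercive : min c₁ c₂ * ((∫ x, ‖g x‖ ^ 2) + ∫ x, u x ^ 2)
      ≤ (∫ x, ‖g x‖ ^ 2) + α * (∫ ξ, ‖ξ‖ ^ (2 * s) * ‖F ξ‖ ^ 2)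
        + (m ^ 2 - ω ^ 2) * ∫ x, u x ^ 2 := by
    calc _ ≤ c₁ * (∫ x, ‖g x‖ ^ 2) + c₂ * ∫ x, u x ^ 2 :=
          min_mul_add_le_mul_add (integral_nonneg fun x => sq_nonneg _)
            (integral_nonneg fun x => sq_nonneg _)
      _ ≤ _ := hc₁ ▸ hc₂ ▸ coercivity_of_fractional_le
          (integral_nonneg fun ξ => mul_nonneg (rpow_nonneg (norm_nonneg ξ) _) (sq_nonneg _)) hfrac
  have hφu : 0 ≤ ∫ x, φ x * u x ^ 2 := integral_nonneg fun x => mul_nonneg (hφpos x) (sq_nonneg _)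
  have hφ2u : 0 ≤ ∫ x, φ x ^ 2 * u x ^ 2 := integral_nonneg fun x => by positivity
  rw [ge_iff_le, pJ_sub_J'_eq (by linarith)]
  linarith [mul_le_mul_of_nonneg_left hcoercive (by linarith : 0 ≤ p / 2 - 1),
    mul_nonneg (mul_nonneg hω.le (by linarith : 0 ≤ p / 2 - 2)) hφu]

/-- Let `s ∈ (0,1)`, `α ∈ ℝ`, `p ∈ [4,6)`, `m > ω > 0`, with
`α⁻ < α₀(s, m²-ω²) = s^(-s) (1-s)^(s-1) (m²-ω²)^(1-s)`, and let `c₁, c₂ > 0` with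
`c₁ = 1 - α⁻ s ε₀` and `c₂ = m² - ω² - α⁻ (1-s) ε₀^(-s/(1-s))` for a suitable `ε₀ > 0`.
Then for every `u ∈ H¹(ℝ³)` and every measurable `φ` with `φ ≥ 0` and `φ ≤ ω` on
`{u ≠ 0}`, the quantity `p·J - J'u`, with
`J = (1/2)B_α(u,u) + ((m²-ω²)/2)‖u‖₂² + (ω/2)∫φu² - (1/p)‖u‖ₚᵖ` and
`J'u = B_α(u,u) + (m²-ω²)‖u‖₂² + 2ω∫φu² - ∫φ²u² - ‖u‖ₚᵖ`, satisfies
`p·J - J'u ≥ (p/2 - 1) min{c₁,c₂} ‖u‖_{H¹}²`.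
Here `B_α(u,u) = ‖∇u‖₂² + α ∫ |ξ|^(2s) |F(ξ)|² dξ` with `F = 𝓕u` encoded through
the Plancherel identities, and `g = ∇u`. -/
theorem stmt_17 (s α p m ω ε₀ c₁ c₂ : ℝ) (hs : s ∈ Set.Ioo (0:ℝ) 1)
    (hp : p ∈ Set.Ico (4:ℝ) 6) (hω : 0 < ω) (hm : ω < m)
    (hα : max (-α) 0 < s ^ (-s) * (1 - s) ^ (s - 1) * (m ^ 2 - ω ^ 2) ^ (1 - s))
    (hε₀ : 0 < ε₀)
    (hc₁ : c₁ = 1 - max (-α) 0 * s * ε₀) (hc₁pos : 0 < c₁)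
    (hc₂ : c₂ = m ^ 2 - ω ^ 2 - max (-α) 0 * (1 - s) * ε₀ ^ (-(s / (1 - s))))
    (hc₂pos : 0 < c₂)
    (u : E3 → ℝ) (g : E3 → E3) (F : E3 → ℂ) (φ : E3 → ℝ)
    (hu2 : MemLp u 2) (hg2 : MemLp g 2)
    (hderiv : ∀ x, HasGradientAt u (g x) x)
    (hF : AEStronglyMeasurable F volume)
    (hFint0 : Integrable (fun ξ => ‖F ξ‖ ^ 2))
    (hFint1 : Integrable (fun ξ => ‖ξ‖ ^ 2 * ‖F ξ‖ ^ 2))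
    (hPl0 : (∫ ξ, ‖F ξ‖ ^ 2) = ∫ x, (u x) ^ 2)
    (hPl1 : (∫ ξ, ‖ξ‖ ^ 2 * ‖F ξ‖ ^ 2) = ∫ x, ‖g x‖ ^ 2)
    (hφmeas : Measurable φ) (hφpos : ∀ x, 0 ≤ φ x)
    (hφω : ∀ x, u x ≠ 0 → φ x ≤ ω)
    (hφu : Integrable (fun x => φ x * (u x) ^ 2))
    (hφ2u : Integrable (fun x => (φ x) ^ 2 * (u x) ^ 2))
    (hup : Integrable (fun x => |u x| ^ p)) :
    p * ((1 / 2) * ((∫ x, ‖g x‖ ^ 2) + α * ∫ ξ, ‖ξ‖ ^ (2 * s) * ‖F ξ‖ ^ 2)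
          + (m ^ 2 - ω ^ 2) / 2 * (∫ x, (u x) ^ 2)
          + (ω / 2) * (∫ x, φ x * (u x) ^ 2) - (1 / p) * ∫ x, |u x| ^ p)
      - (((∫ x, ‖g x‖ ^ 2) + α * ∫ ξ, ‖ξ‖ ^ (2 * s) * ‖F ξ‖ ^ 2)
          + (m ^ 2 - ω ^ 2) * (∫ x, (u x) ^ 2)
          + 2 * ω * (∫ x, φ x * (u x) ^ 2) - (∫ x, (φ x) ^ 2 * (u x) ^ 2)
          - ∫ x, |u x| ^ p)
      ≥ (p / 2 - 1) * min c₁ c₂ * ((∫ x, (u x) ^ 2) + ∫ x, ‖g x‖ ^ 2) :=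
  stmt_17_general s α p m ω ε₀ c₁ c₂ hs hp hω hε₀ hc₁ hc₂ u g F φ hFint0 hFint1 hPl0 hPl1 hφpos
end
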